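/- arXiv:2209.07112 — 6 statements merged into one kernel-verified Lean document; each statement's English description precedes it below -/
import Mathlib

section
/- Let S be a reduced E-Fountain semigroup satisfying the congruence condition. Then S satisfies the generalized right ample identity (e(a(eaf)*)^+)* = (a(eaf)*)^+ for all a ∈ S, e,f ∈ E if and only if it satisfies the simplified identity (e(a(ea)*)^+)* = (a(ea)*)^+ for all a ∈ S, e ∈ E. -/
/-- A reduced `E`-Fountain semigroup: a semigroup with a distinguished set of
idempotents `E`, where `star a` (resp. `plus a`) is the unique idempotent of `E`
in the `~L`-class (resp. `~R`-class) of `a`, and `ef = e ↔ fe = e` on `E`. -/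
structure DRC (S : Type*) [Semigroup S] where
  E : Set S
  star : S → S
  plus : S → S
  idemE : ∀ e ∈ E, e * e = e
  starE : ∀ a : S, star a ∈ E
  plusE : ∀ a : S, plus a ∈ E
  star_idem : ∀ e ∈ E, star e = e
  plus_idem : ∀ e ∈ E, plus e = e
  /-- `a ~L star a`: `a` and `star a` have the same right identities from `E`. -/
  star_L : ∀ a : S, ∀ e ∈ E, (a * e = a ↔ star a * e = star a)
  /-- `a ~R plus a`: `a` and `plus a` have the same left identities from `E`. -/
  plus_R : ∀ a : S, ∀ e ∈ E, (e * a = a ↔ e * plus a = plus a)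
  reduced : ∀ e ∈ E, ∀ f ∈ E, (e * f = e ↔ f * e = e)

/-- A reduced `E`-Fountain semigroup satisfying the congruence condition. -/
structure DRCC (S : Type*) [Semigroup S] extends DRC S where
  congr_star : ∀ a b : S, star (a * b) = star (star a * b)
  congr_plus : ∀ a b : S, plus (a * b) = plus (a * plus b)

/-- The generalized right ample identity holds iff the simplified identity
(with `f = a*` suppressed) holds. -/
theorem statement0 {S : Type*} [Semigroup S] (D : DRCC S) :
    (∀ a : S, ∀ e ∈ D.E, ∀ f ∈ D.E,
        D.star (e * D.plus (a * D.star (e * a * f))) = D.plus (a * D.star (e * a * f)))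
    ↔
    (∀ a : S, ∀ e ∈ D.E,
        D.star (e * D.plus (a * D.star (e * a))) = D.plus (a * D.star (e * a))) := by
  have mul_star : ∀ a : S, a * D.star a = a := by
    intro a
    exact (D.star_L a (D.star a) (D.starE a)).mpr (D.idemE _ (D.starE a))
  constructor
  · intro h a e he
    have := h a e he (D.star (e * a)) (D.starE (e * a))
    rwa [mul_star (e * a)] at this
  · intro h a e he f hf
    have key : f * D.star (e * a * f) = D.star (e * a * f) := by
      have h1 : (e * a * f) * f = e * a * f := by
        rw [mul_assoc, D.idemE f hf]
      have h2 : D.star (e * a * f) * f = D.star (e * a * f) :=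
        (D.star_L (e * a * f) f hf).mp h1
      exact (D.reduced _ (D.starE _) f hf).mp h2
    have := h (a * f) e he
    rw [← mul_assoc, mul_assoc a f, key] at this
    exact this
end

section
/- Let S be a reduced E-Fountain semigroup satisfying the congruence condition. Then S satisfies the generalized right ample identity if and only if for every α ∈ S the map r_α : ~L(α^+) → ~L(α*), r_α(x) = xα, is a homomorphism of partial left S-actions, where S acts partially on ~L(e) by s·x = sx when (sx)* = e and undefined otherwise. -/
namespace DRC

variable {S : Type*} [Semigroup S]

/-- `a · a* = a`. -/
lemma mul_star (D : DRC S) (a : S) : a * D.star a = a :=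
  (D.star_L a (D.star a) (D.starE a)).mpr (D.idemE _ (D.starE a))

/-- `a⁺ · a = a`. -/
lemma plus_mul (D : DRC S) (a : S) : D.plus a * a = a :=
  (D.plus_R a (D.plus a) (D.plusE a)).mpr (D.idemE _ (D.plusE a))

end DRC

/-- Key lemma: for `t = (eaf)*` one has `(at)* = t` and `(e(at))* = t`. -/
lemma DRCC.key {S : Type*} [Semigroup S] (D : DRCC S) (a e f : S)
    (he : e ∈ D.E) (hf : f ∈ D.E) :
    D.star (a * D.star (e * a * f)) = D.star (e * a * f) ∧
      D.star (e * (a * D.star (e * a * f))) = D.star (e * a * f) := by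
  have htE : D.star (e * a * f) ∈ D.E := D.starE _
  have htf : D.star (e * a * f) * f = D.star (e * a * f) :=
    (D.star_L (e * a * f) f hf).mp (by rw [mul_assoc, D.idemE f hf])
  have hft : f * D.star (e * a * f) = D.star (e * a * f) :=
    (D.reduced _ htE f hf).mp htf
  have hmE : D.star (a * f) ∈ D.E := D.starE _
  have htm : D.star (e * a * f) * D.star (a * f) = D.star (e * a * f) :=
    (D.star_L (e * a * f) (D.star (a * f)) hmE).mp
      (by rw [mul_assoc e a f, mul_assoc, D.toDRC.mul_star])
  have hmt : D.star (a * f) * D.star (e * a * f) = D.star (e * a * f) :=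
    (D.reduced _ htE _ hmE).mp htm
  constructor
  · have h1 : a * D.star (e * a * f) = a * f * D.star (e * a * f) := by
      rw [mul_assoc a f, hft]
    rw [h1, D.congr_star, hmt, D.star_idem _ htE]
  · have h2 : e * (a * D.star (e * a * f)) = (e * a * f) * D.star (e * a * f) := by
      rw [mul_assoc (e * a) f, hft, ← mul_assoc e a]
    rw [h2, D.congr_star, D.idemE _ htE, D.star_idem _ htE]

/-- The generalized right ample identity holds iff for every `α` the map
`r_α : ~L(α⁺) → ~L(α*)`, `x ↦ xα`, is a homomorphism of partial left `S`-actions: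
`s·x` is defined iff `s·(xα)` is defined, and then `r_α(s·x) = s·r_α(x)`. -/
theorem statement5 {S : Type*} [Semigroup S] (D : DRCC S) :
    (∀ a : S, ∀ e ∈ D.E, ∀ f ∈ D.E,
        D.star (e * D.plus (a * D.star (e * a * f))) = D.plus (a * D.star (e * a * f)))
    ↔
    (∀ α s x : S, D.star x = D.plus α →
      ((D.star (s * x) = D.plus α ↔ D.star (s * (x * α)) = D.star α) ∧
        (D.star (s * x) = D.plus α → (s * x) * α = s * (x * α)))) := by
  constructor
  · intro hid α s x hx
    refine ⟨⟨?_, ?_⟩, fun _ => mul_assoc s x α⟩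
    · -- defined for x ⇒ defined for xα
      intro h
      have : s * (x * α) = (s * x) * α := (mul_assoc s x α).symm
      rw [this, D.congr_star, h, D.toDRC.plus_mul]
    · -- defined for xα ⇒ defined for x
      intro h
      have hgE : D.star (s * x) ∈ D.E := D.starE _
      have hxp : x * D.plus α = x := by rw [← hx]; exact D.toDRC.mul_star x
      have h1 : (s * x) * D.plus α = s * x := by rw [mul_assoc, hxp]
      have h2 : D.star (s * x) * D.plus α = D.star (s * x) :=
        (D.star_L (s * x) (D.plus α) (D.plusE α)).mp h1
      have h3 : D.star (D.star (s * x) * α) = D.star α := by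
        rw [← D.congr_star, mul_assoc]; exact h
      have h4 := hid α (D.star (s * x)) hgE (D.star α) (D.starE α)
      have e1 : D.star (s * x) * α * D.star α = D.star (s * x) * α := by
        rw [mul_assoc, D.toDRC.mul_star]
      rw [e1, h3, D.toDRC.mul_star, h2, D.star_idem _ hgE] at h4
      exact h4
  · intro H a e he f hf
    obtain ⟨hb, heb⟩ := D.key a e f he hf
    have hx : D.star (D.plus (a * D.star (e * a * f))) = D.plus (a * D.star (e * a * f)) :=
      D.star_idem _ (D.plusE _)
    refine ((H (a * D.star (e * a * f)) e (D.plus (a * D.star (e * a * f))) hx).1).mpr ?_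
    rw [D.toDRC.plus_mul, heb, hb]
end

section
/- Let S be a reduced E-Fountain semigroup, e, f ∈ E, and let F : ~L(e) → ~L(f) be a homomorphism of partial left S-actions (where S acts on ~L(g) by s·x = sx when (sx)* = g). Then F = r_α where α = F(e) satisfies α^+ = e and α* = f, and F(x) = xα for all x ∈ ~L(e). -/
/-- Every homomorphism of partial left `S`-actions `F : ~L(e) → ~L(f)` is `r_a0`
for `a0 = F(e)`, which satisfies `a0⁺ = e` and `a0* = f`. -/
theorem statement6 {S : Type*} [Semigroup S] (D : DRC S) (e f : S)
    (he : e ∈ D.E) (hf : f ∈ D.E)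
    (F : {x : S // D.star x = e} → {x : S // D.star x = f})
    (hiff : ∀ (s : S) (x : {x : S // D.star x = e}),
      (D.star (s * x.1) = e ↔ D.star (s * (F x).1) = f))
    (heq : ∀ (s : S) (x : {x : S // D.star x = e})
      (h1 : D.star (s * x.1) = e) (h2 : D.star (s * (F x).1) = f),
      F ⟨s * x.1, h1⟩ = ⟨s * (F x).1, h2⟩) :
    D.plus (F ⟨e, D.star_idem e he⟩).1 = e ∧
    D.star (F ⟨e, D.star_idem e he⟩).1 = f ∧
    ∀ x : {x : S // D.star x = e}, (F x).1 = x.1 * (F ⟨e, D.star_idem e he⟩).1 := by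
  have hee : e * e = e := D.idemE e he
  let e0 : {x : S // D.star x = e} := ⟨e, D.star_idem e he⟩
  set a0 : S := (F e0).1 with ha0
  have ha0f : D.star a0 = f := (F e0).2
  have h1 : D.star (e * e0.1) = e := by
    show D.star (e * e) = e
    rw [hee]; exact D.star_idem e he
  have h2 : D.star (e * a0) = f := (hiff e e0).mp h1
  have key : F ⟨e * e0.1, h1⟩ = ⟨e * a0, h2⟩ := heq e e0 h1 h2
  have hea0 : e * a0 = a0 := by
    have hx : (⟨e * e0.1, h1⟩ : {x : S // D.star x = e}) = e0 :=
      Subtype.ext (by show e * e = e; exact hee)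
    rw [hx] at key
    exact (congrArg Subtype.val key).symm
  have hplus : D.plus a0 = e := by
    have hpl : e * D.plus a0 = D.plus a0 := (D.plus_R a0 e he).mp hea0
    have hple : D.plus a0 * e = D.plus a0 :=
      (D.reduced (D.plus a0) (D.plusE a0) e he).mpr hpl
    have hpa : D.plus a0 * a0 = a0 :=
      (D.plus_R a0 (D.plus a0) (D.plusE a0)).mpr (D.idemE _ (D.plusE a0))
    have h3 : D.star (D.plus a0 * a0) = f := by rw [hpa]; exact ha0f
    have h4 : D.star (D.plus a0 * e0.1) = e := (hiff (D.plus a0) e0).mpr h3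
    have h4' : D.star (D.plus a0 * e) = e := h4
    rw [hple] at h4'
    rw [← h4', D.star_idem _ (D.plusE a0)]
  refine ⟨hplus, ha0f, ?_⟩
  intro x
  have hxe : x.1 * e = x.1 := (D.star_L x.1 e he).mpr (by rw [x.2]; exact hee)
  have hx1 : D.star (x.1 * e0.1) = e := by
    show D.star (x.1 * e) = e
    rw [hxe]; exact x.2
  have hx2 : D.star (x.1 * a0) = f := (hiff x.1 e0).mp hx1
  have keyx : F ⟨x.1 * e0.1, hx1⟩ = ⟨x.1 * a0, hx2⟩ := heq x.1 e0 hx1 hx2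
  have hx : (⟨x.1 * e0.1, hx1⟩ : {x : S // D.star x = e}) = x :=
    Subtype.ext (by show x.1 * e = x.1; exact hxe)
  rw [hx] at keyx
  rw [keyx]
end

section
/- Let S be a reduced E-Fountain semigroup satisfying the congruence condition and the generalized right ample identity. The associated category C(S) is isomorphic, as a category, to the opposite of the category D(S) whose objects are the ~L-classes ~L(e) for e ∈ E and whose morphisms ~L(e) → ~L(f) are the homomorphisms of partial left S-actions. -/
open CategoryTheory

variable {S : Type*} [Semigroup S]

theorem DRC.star_right (D : DRC S) (a : S) : a * D.star a = a :=
  (D.star_L a (D.star a) (D.starE a)).mpr (D.idemE _ (D.starE a))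

theorem DRC.plus_left (D : DRC S) (a : S) : D.plus a * a = a :=
  (D.plus_R a (D.plus a) (D.plusE a)).mpr (D.idemE _ (D.plusE a))

/-- Objects of the associated category `C(S)`: the idempotents of `E`. -/
structure CObj (D : DRCC S) where
  e : S
  he : e ∈ D.E

/-- The associated category `C(S)`: morphisms `e → f` are elements `a ∈ S`
with `a* = e`, `a⁺ = f`; composition is multiplication. -/
instance CCat (D : DRCC S) : Category (CObj D) where
  Hom X Y := {a : S // D.star a = X.e ∧ D.plus a = Y.e}
  id X := ⟨X.e, D.star_idem X.e X.he, D.plus_idem X.e X.he⟩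
  comp {X Y Z} u v := ⟨v.1 * u.1, by
    obtain ⟨a, ha1, ha2⟩ := u
    obtain ⟨b, hb1, hb2⟩ := v
    constructor
    · show D.star (b * a) = X.e
      rw [D.congr_star, hb1, ← ha2, D.toDRC.plus_left, ha1]
    · show D.plus (b * a) = Z.e
      rw [D.congr_plus, ha2, ← hb1, D.toDRC.star_right, hb2]⟩
  id_comp {X Y} u := by
    obtain ⟨a, ha1, ha2⟩ := u
    exact Subtype.ext (by show a * X.e = a; rw [← ha1, D.toDRC.star_right])
  comp_id {X Y} u := by
    obtain ⟨a, ha1, ha2⟩ := u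
    exact Subtype.ext (by show Y.e * a = a; rw [← ha2, D.toDRC.plus_left])
  assoc u v w := Subtype.ext (mul_assoc w.1 v.1 u.1).symm

/-- Objects of the category `D(S)`: the `~L`-classes `~L(e)`, indexed by
`e ∈ E`. -/
structure DObj (D : DRCC S) where
  e : S
  he : e ∈ D.E

/-- The `~L`-class of `e`: `{x : x* = e}`. -/
def LC (D : DRCC S) (e : S) := {x : S // D.star x = e}

/-- `F : ~L(e) → ~L(f)` is a homomorphism of partial left `S`-actions:
`s·x` is defined iff `s·F(x)` is defined, and then `F(s·x) = s·F(x)`. -/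
def IsActionHom (D : DRCC S) (e f : S) (F : LC D e → LC D f) : Prop :=
  (∀ (s : S) (x : LC D e), (D.star (s * x.1) = e ↔ D.star (s * (F x).1) = f)) ∧
  ∀ (s : S) (x : LC D e) (h1 : D.star (s * x.1) = e)
    (h2 : D.star (s * (F x).1) = f), F ⟨s * x.1, h1⟩ = ⟨s * (F x).1, h2⟩

/-- The category `D(S)`: morphisms `~L(e) → ~L(f)` are the homomorphisms of
partial left `S`-actions. -/
instance DCat (D : DRCC S) : Category (DObj D) where
  Hom X Y := {F : LC D X.e → LC D Y.e // IsActionHom D X.e Y.e F}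
  id X := ⟨id, fun _ _ => Iff.rfl, fun _ _ _ _ => rfl⟩
  comp {X Y Z} u v := ⟨v.1 ∘ u.1,
    fun s x => (u.2.1 s x).trans (v.2.1 s (u.1 x)),
    fun s x h1 h2 => by
      have h1' := (u.2.1 s x).mp h1
      show v.1 (u.1 ⟨s * x.1, h1⟩) = _
      rw [u.2.2 s x h1 h1']
      exact v.2.2 s (u.1 x) h1' h2⟩
  id_comp u := Subtype.ext rfl
  comp_id u := Subtype.ext rfl
  assoc u v w := Subtype.ext rfl

theorem DRC.star_right' (D : DRC S) (a e : S) (h : D.star a = e) : a * e = a :=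
  h ▸ D.star_right a

theorem DRC.plus_left' (D : DRC S) (a e : S) (h : D.plus a = e) : e * a = a :=
  h ▸ D.plus_left a

/-- Key consequence of the generalized right ample identity: if `g ∈ E`,
`g·α⁺ = g` and `(gα)* = α*`, then `g = α⁺`. -/
theorem DRCC.gra_key (D : DRCC S)
    (hGRA : ∀ a : S, ∀ e ∈ D.E, ∀ f ∈ D.E,
      D.star (e * D.plus (a * D.star (e * a * f))) = D.plus (a * D.star (e * a * f)))
    (α g : S) (hgE : g ∈ D.E) (hge : g * D.plus α = g)
    (h : D.star (g * α) = D.star α) : g = D.plus α := by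
  have h1 : g * α * D.star α = g * α := by
    apply (D.star_L (g * α) (D.star α) (D.starE α)).mpr
    rw [h]; exact D.idemE _ (D.starE α)
  have hkey := hGRA α g hgE (D.star α) (D.starE α)
  rw [h1, h, D.star_right] at hkey
  rw [hge] at hkey
  rwa [D.star_idem g hgE] at hkey

/-- The iff needed for action homomorphisms: for `b` with `b·α⁺ = b`,
`b* = α⁺ ↔ (bα)* = α*`. -/
theorem DRCC.act_iff (D : DRCC S)
    (hGRA : ∀ a : S, ∀ e ∈ D.E, ∀ f ∈ D.E,
      D.star (e * D.plus (a * D.star (e * a * f))) = D.plus (a * D.star (e * a * f)))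
    (α b : S) (hb : b * D.plus α = b) :
    (D.star b = D.plus α ↔ D.star (b * α) = D.star α) := by
  constructor
  · intro h
    rw [D.congr_star, h, D.plus_left]
  · intro h
    have hge : D.star b * D.plus α = D.star b :=
      (D.star_L b (D.plus α) (D.plusE α)).mp hb
    have h' : D.star (D.star b * α) = D.star α := by
      rw [← D.congr_star]; exact h
    exact D.gra_key hGRA α (D.star b) (D.starE b) hge h'

/-- The functor `C(S)ᵒᵖ ⥤ D(S)`, sending `e` to `~L(e)` and `C(α)` to
`r_α : x ↦ xα`. -/
def DRCC.toFunctor (D : DRCC S)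
    (hGRA : ∀ a : S, ∀ e ∈ D.E, ∀ f ∈ D.E,
      D.star (e * D.plus (a * D.star (e * a * f))) = D.plus (a * D.star (e * a * f))) :
    (CObj D)ᵒᵖ ⥤ DObj D where
  obj X := ⟨X.unop.e, X.unop.he⟩
  map {X Y} u := ⟨fun x => ⟨x.1 * u.unop.1, by
      have e1 : D.star x.1 * u.unop.1 = u.unop.1 := by
        rw [x.2]; exact D.toDRC.plus_left' u.unop.1 X.unop.e u.unop.2.2
      exact (D.congr_star x.1 u.unop.1).trans
        ((congrArg D.star e1).trans u.unop.2.1)⟩, by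
    constructor
    · intro s x
      have hx : x.1 * X.unop.e = x.1 := D.toDRC.star_right' x.1 X.unop.e x.2
      have hb : (s * x.1) * D.plus u.unop.1 = s * x.1 := by
        rw [u.unop.2.2, mul_assoc, hx]
      have key := D.act_iff hGRA u.unop.1 (s * x.1) hb
      constructor
      · intro h
        have h' : D.star (s * x.1) = D.plus u.unop.1 := by
          rw [u.unop.2.2]; exact h
        show D.star (s * (x.1 * u.unop.1)) = Y.unop.e
        rw [← mul_assoc]
        exact (key.mp h').trans u.unop.2.1
      · intro h
        have h' : D.star ((s * x.1) * u.unop.1) = D.star u.unop.1 := by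
          rw [mul_assoc, u.unop.2.1]; exact h
        have h2 := key.mpr h'
        rw [u.unop.2.2] at h2
        exact h2
    · intro s x h1 h2
      exact Subtype.ext (mul_assoc s x.1 u.unop.1)⟩
  map_id X := Subtype.ext (funext fun x => Subtype.ext
    (D.toDRC.star_right' x.1 X.unop.e x.2))
  map_comp {X Y Z} u v := Subtype.ext (funext fun x => Subtype.ext
    (mul_assoc x.1 u.unop.1 v.unop.1).symm)

/-- If `S` is a reduced `E`-Fountain semigroup satisfying the congruence
condition and the generalized right ample identity, then `C(S)ᵒᵖ` is isomorphic
(as a category: via a functor bijective on objects and on hom-sets) to the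
category `D(S)` of `~L`-classes and homomorphisms of partial left
`S`-actions. -/
theorem statement7 (D : DRCC S)
    (hGRA : ∀ a : S, ∀ e ∈ D.E, ∀ f ∈ D.E,
      D.star (e * D.plus (a * D.star (e * a * f))) = D.plus (a * D.star (e * a * f))) :
    ∃ F : (CObj D)ᵒᵖ ⥤ DObj D,
      Function.Bijective F.obj ∧
      ∀ X Y : (CObj D)ᵒᵖ, Function.Bijective (fun u : X ⟶ Y => F.map u) := by
  refine ⟨D.toFunctor hGRA, ?_, ?_⟩
  · apply Function.bijective_iff_has_inverse.mpr
    exact ⟨fun Y => Opposite.op ⟨Y.e, Y.he⟩, fun X => rfl, fun Y => rfl⟩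
  · intro X Y
    constructor
    · -- injectivity on homs
      intro u v h
      apply Quiver.Hom.unop_inj
      apply Subtype.ext
      have hx := congrArg Subtype.val (congrFun (congrArg Subtype.val h)
        ⟨X.unop.e, D.star_idem _ X.unop.he⟩)
      have hx' : X.unop.e * u.unop.1 = X.unop.e * v.unop.1 := hx
      have hu : X.unop.e * u.unop.1 = u.unop.1 :=
        D.toDRC.plus_left' u.unop.1 X.unop.e u.unop.2.2
      have hv : X.unop.e * v.unop.1 = v.unop.1 :=
        D.toDRC.plus_left' v.unop.1 X.unop.e v.unop.2.2
      exact hu.symm.trans (hx'.trans hv)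
    · -- surjectivity on homs
      intro G
      have heE : X.unop.e ∈ D.E := X.unop.he
      have hee : X.unop.e * X.unop.e = X.unop.e := D.idemE _ heE
      let x₀ : LC D X.unop.e := ⟨X.unop.e, D.star_idem _ heE⟩
      let α : S := (G.1 x₀).1
      have hstarα : D.star α = Y.unop.e := (G.1 x₀).2
      have h1 : D.star (X.unop.e * x₀.1) = X.unop.e := by
        show D.star (X.unop.e * X.unop.e) = X.unop.e
        rw [hee]; exact D.star_idem _ heE
      have h2 := (G.2.1 X.unop.e x₀).mp h1
      have hG1 : G.1 ⟨X.unop.e * x₀.1, h1⟩ = ⟨X.unop.e * α, h2⟩ :=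
        G.2.2 X.unop.e x₀ h1 h2
      have hx₀eq : (⟨X.unop.e * x₀.1, h1⟩ :
          LC D ((D.toFunctor hGRA).obj X).e) = x₀ := Subtype.ext hee
      have heα : X.unop.e * α = α :=
        (congrArg Subtype.val ((congrArg G.1 hx₀eq).symm.trans hG1)).symm
      have hplusα : D.plus α = X.unop.e := by
        have h3 : X.unop.e * D.plus α = D.plus α := (D.plus_R α _ heE).mp heα
        have h4 : D.plus α * X.unop.e = D.plus α :=
          (D.reduced (D.plus α) (D.plusE α) _ heE).mpr h3
        have h5 : D.star (D.plus α * (G.1 x₀).1) = Y.unop.e := by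
          show D.star (D.plus α * α) = Y.unop.e
          rw [D.plus_left]; exact hstarα
        have h6 : D.star (D.plus α * x₀.1) = X.unop.e :=
          (G.2.1 (D.plus α) x₀).mpr h5
        have h7 : D.star (D.plus α * X.unop.e) = X.unop.e := h6
        rw [h4] at h7
        rw [D.star_idem (D.plus α) (D.plusE α)] at h7
        exact h7
      refine ⟨Quiver.Hom.op (⟨α, hstarα, hplusα⟩ : Y.unop ⟶ X.unop), ?_⟩
      apply Subtype.ext
      funext x
      have hxe : x.1 * X.unop.e = x.1 := D.toDRC.star_right' x.1 X.unop.e x.2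
      have hh1 : D.star (x.1 * x₀.1) = X.unop.e := by
        show D.star (x.1 * X.unop.e) = X.unop.e
        rw [hxe]; exact x.2
      have hh2 := (G.2.1 x.1 x₀).mp hh1
      have hGx : G.1 ⟨x.1 * x₀.1, hh1⟩ = ⟨x.1 * α, hh2⟩ := G.2.2 x.1 x₀ hh1 hh2
      have hxeq : (⟨x.1 * x₀.1, hh1⟩ :
          LC D ((D.toFunctor hGRA).obj X).e) = x := Subtype.ext hxe
      exact (Subtype.ext rfl).trans (hGx.symm.trans (congrArg G.1 hxeq))
end

section
/- In OF_n, two elements f_{X,Y} and f_{Z,W} are R-equivalent iff Y = W (equivalently, they have the same image), and L-equivalent iff X = Z (equivalently, the same kernel). Consequently OF_n is H-trivial. -/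
/-- The order-preserving map `f_{X,Y} : [n+1] → [n+1]` (with top element
`Fin.last n` playing the role of `n+1`, and `X, Y ⊆ [n]` via `Fin.castSucc`)
determined by equal-size subsets `X, Y`: it sends the interval
`(x_{i-1}, x_i]` to `y_i` and everything above `x_l` to the top. -/
def fXY (n : ℕ) (X Y : Finset (Fin n)) (_h : X.card = Y.card) :
    Fin (n + 1) → Fin (n + 1) := fun x =>
  if hk : (X.filter fun t => t.castSucc < x).card < Y.card then
    (Y.orderEmbOfFin rfl ⟨_, hk⟩).castSucc
  else Fin.last n

theorem fXY_monotone (n : ℕ) (X Y : Finset (Fin n)) (h : X.card = Y.card) :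
    Monotone (fXY n X Y h) := by
  intro a b hab
  unfold fXY
  have hle : (X.filter fun t => t.castSucc < a).card ≤
      (X.filter fun t => t.castSucc < b).card :=
    Finset.card_le_card (Finset.monotone_filter_right X
      (fun t _ ht => lt_of_lt_of_le ht hab))
  by_cases ha : (X.filter fun t => t.castSucc < a).card < Y.card
  · by_cases hb : (X.filter fun t => t.castSucc < b).card < Y.card
    · rw [dif_pos ha, dif_pos hb]
      exact Fin.castSucc_le_castSucc_iff.mpr
        ((Y.orderEmbOfFin rfl).monotone (by exact hle))
    · rw [dif_pos ha, dif_neg hb]; exact Fin.le_last _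
  · have hb : ¬(X.filter fun t => t.castSucc < b).card < Y.card := by omega
    rw [dif_neg ha, dif_neg hb]

theorem fXY_last (n : ℕ) (X Y : Finset (Fin n)) (h : X.card = Y.card) :
    fXY n X Y h (Fin.last n) = Fin.last n := by
  unfold fXY
  rw [Finset.filter_true_of_mem (fun t _ => Fin.castSucc_lt_last t), h,
    dif_neg (lt_irrefl _)]

/-- The monoid `OF_{n+1}` of order-preserving self-maps of `[n+1]` fixing the
top element, as a submonoid of `Function.End (Fin (n+1))`. -/
def OFmon (n : ℕ) : Submonoid (Function.End (Fin (n + 1))) where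
  carrier := {f | Monotone f ∧ f (Fin.last n) = Fin.last n}
  mul_mem' := by
    rintro f g ⟨hf1, hf2⟩ ⟨hg1, hg2⟩
    refine ⟨hf1.comp hg1, ?_⟩
    show f (g (Fin.last n)) = Fin.last n
    rw [hg2, hf2]
  one_mem' := ⟨monotone_id, rfl⟩

def FXY (n : ℕ) (X Y : Finset (Fin n)) (h : X.card = Y.card) : OFmon n :=
  ⟨fXY n X Y h, fXY_monotone n X Y h, fXY_last n X Y h⟩

/-- Green's `R`-equivalence on a monoid. -/
def RRel {M : Type*} [Monoid M] (a b : M) : Prop :=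
  (∃ u, a * u = b) ∧ ∃ u, b * u = a

/-- Green's `L`-equivalence on a monoid. -/
def LRel {M : Type*} [Monoid M] (a b : M) : Prop :=
  (∃ u, u * a = b) ∧ ∃ u, u * b = a

/-- Green's `J`-equivalence on a monoid. -/
def JRel {M : Type*} [Monoid M] (a b : M) : Prop :=
  (∃ u v, u * a * v = b) ∧ ∃ u v, u * b * v = a

/-!
Both Green relations are read off from image and kernel. If `im g ⊆ im f`, then `g = f ∘ u`
where `u x` is the largest `f`-preimage of `g x`; if `ker f ⊆ ker g`, then `g = u ∘ f` where
`u y = g t` for the least `t` with `y ≤ f t`. Both `u` are order-preserving and fix the top.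
A monotone map on a well-order is determined by its image and kernel: at the least point
where two such maps differ, the smaller value is attained by the other map at an earlier point,
where the maps still agree, and the kernels then force the values to coincide. This gives
`H`-triviality. For `f_{X,Y}` the image is `Y ∪ {top}`, and `t`, `t + 1` lie in different
kernel classes exactly when `t ∈ X`.
-/

open Set

section MonotoneFactorization

variable {α β γ : Type*} [LinearOrder α]

theorem Monotone.exists_monotone_comp_eq_of_range_subset [Finite α] [LinearOrder β]
    [Preorder γ] {f : α → β} {g : γ → β} (hf : Monotone f) (hg : Monotone g)
    (h : range g ⊆ range f) :
    ∃ u : γ → α, Monotone u ∧ f ∘ u = g ∧ ∀ c a, f a = g c → a ≤ u c := by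
  have hmax (c : γ) : ∃ a, f a = g c ∧ ∀ a', f a' = g c → a' ≤ a :=
    exists_max_image {a | f a = g c} id (toFinite _) (h ⟨c, rfl⟩)
  choose u hu hu_max using hmax
  refine ⟨u, fun c c' hcc' => ?_, funext hu, hu_max⟩
  rcases (hg hcc').lt_or_eq with hlt | heq
  · exact (hf.reflect_lt (by rwa [hu, hu])).le
  · exact hu_max c' (u c) (by rw [hu, heq])

theorem Monotone.exists_monotone_comp_eq_of_ker_le [Finite α] [PartialOrder β] [Preorder γ]
    {f : α → β} {g : α → γ} (hf : Monotone f) (hg : Monotone g) (hcof : ∀ b, ∃ a, b ≤ f a)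
    (hker : ∀ a a', f a = f a' → g a = g a') : ∃ u : β → γ, Monotone u ∧ u ∘ f = g := by
  have hmin (b : β) : ∃ a, b ≤ f a ∧ ∀ a', b ≤ f a' → a ≤ a' :=
    exists_min_image {a | b ≤ f a} id (toFinite _) (hcof b)
  choose m hm hm_min using hmin
  refine ⟨g ∘ m, hg.comp fun b b' hbb' => hm_min b _ (hbb'.trans (hm b')), funext fun a => ?_⟩
  exact hker _ _ ((hf (hm_min _ a le_rfl)).antisymm (hm _))

theorem Monotone.le_of_range_subset_of_eqOn_Iio [LinearOrder β] {f g : α → β} (hg : Monotone g)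
    (hr : range f ⊆ range g) (hk : ∀ a a', f a = f a' → g a = g a') {x : α}
    (hx : ∀ y < x, f y = g y) : g x ≤ f x := by
  by_contra! hlt
  obtain ⟨y, hy⟩ := hr ⟨x, rfl⟩
  have hyx : y < x := hg.reflect_lt (hy ▸ hlt)
  exact hlt.ne (hy ▸ hk y x ((hx y hyx).trans hy))

theorem Monotone.eq_of_range_eq_of_ker_eq [WellFoundedLT α] [LinearOrder β] {f g : α → β}
    (hf : Monotone f) (hg : Monotone g) (hr : range f = range g)
    (hk : ∀ a a', f a = f a' ↔ g a = g a') : f = g := by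
  funext x
  induction x using WellFoundedLT.induction with
  | _ x ih =>
    exact le_antisymm
      (hf.le_of_range_subset_of_eqOn_Iio hr.ge (fun a a' => (hk a a').mpr)
        fun y hy => (ih y hy).symm)
      (hg.le_of_range_subset_of_eqOn_Iio hr.le (fun a a' => (hk a a').mp) ih)

end MonotoneFactorization

namespace OFmon

variable {n : ℕ}

theorem monotone (f : OFmon n) : Monotone f.1 := f.2.1

theorem map_last (f : OFmon n) : f.1 (Fin.last n) = Fin.last n := f.2.2

theorem exists_mul_eq_iff_range_subset (f g : OFmon n) :
    (∃ u, f * u = g) ↔ range g.1 ⊆ range f.1 := by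
  refine ⟨fun ⟨u, hu⟩ => hu ▸ range_comp_subset_range u.1 f.1, fun h => ?_⟩
  obtain ⟨u, hu, hfu, hu_max⟩ := (monotone f).exists_monotone_comp_eq_of_range_subset (monotone g) h
  have hu_last : u (Fin.last n) = Fin.last n :=
    (Fin.le_last _).antisymm (hu_max _ _ (by rw [map_last f, map_last g]))
  exact ⟨⟨u, hu, hu_last⟩, Subtype.ext hfu⟩

theorem exists_mul_eq_iff_ker_le (f g : OFmon n) :
    (∃ u, u * f = g) ↔ ∀ i j, f.1 i = f.1 j → g.1 i = g.1 j := by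
  refine ⟨fun ⟨u, hu⟩ i j hij => hu ▸ congrArg u.1 hij, fun h => ?_⟩
  obtain ⟨u, hu, hcomp⟩ := (monotone f).exists_monotone_comp_eq_of_ker_le (monotone g)
    (fun b => ⟨Fin.last n, (map_last f).ge.trans' (Fin.le_last b)⟩) h
  have hu_last : u (Fin.last n) = Fin.last n :=
    calc u (Fin.last n) = u (f.1 (Fin.last n)) := by rw [map_last f]
      _ = Fin.last n := (congrFun hcomp _).trans (map_last g)
  exact ⟨⟨u, hu, hu_last⟩, Subtype.ext hcomp⟩

theorem rRel_iff_range_eq (f g : OFmon n) : RRel f g ↔ range f.1 = range g.1 := by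
  rw [RRel, exists_mul_eq_iff_range_subset, exists_mul_eq_iff_range_subset,
    Subset.antisymm_iff, and_comm]

theorem lRel_iff_ker_eq (f g : OFmon n) :
    LRel f g ↔ ∀ i j, (f.1 i = f.1 j ↔ g.1 i = g.1 j) := by
  simp only [LRel, exists_mul_eq_iff_ker_le, iff_def, forall_and]

theorem eq_of_rRel_of_lRel {f g : OFmon n} (hR : RRel f g) (hL : LRel f g) : f = g :=
  Subtype.ext <| (monotone f).eq_of_range_eq_of_ker_eq (monotone g)
    ((rRel_iff_range_eq f g).mp hR) ((lRel_iff_ker_eq f g).mp hL)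

end OFmon

theorem Finset.card_filter_lt_orderEmbOfFin {α : Type*} [LinearOrder α] (s : Finset α)
    (k : Fin s.card) : (s.filter (· < s.orderEmbOfFin rfl k)).card = k := by
  have hs : s.filter (· < s.orderEmbOfFin rfl k) =
      (Finset.Iio k).map (s.orderEmbOfFin rfl).toEmbedding := by
    ext t
    simp only [Finset.mem_filter, Finset.mem_map, Finset.mem_Iio]
    constructor
    · rintro ⟨ht, hlt⟩
      obtain ⟨j, rfl⟩ : t ∈ Set.range (s.orderEmbOfFin rfl) := by simpa using ht
      exact ⟨j, by simpa using hlt, rfl⟩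
    · rintro ⟨j, hj, rfl⟩
      simpa using hj
  rw [hs, Finset.card_map, Fin.card_Iio]

theorem Finset.mem_iff_card_filter_lt_ne_card_filter_le {α : Type*} [LinearOrder α]
    (s : Finset α) (t : α) : t ∈ s ↔ (s.filter (· < t)).card ≠ (s.filter (· ≤ t)).card := by
  refine ⟨fun ht => (Finset.card_lt_card ?_).ne, fun hne => by_contra fun ht => hne ?_⟩
  · refine Finset.ssubset_iff_of_subset (Finset.monotone_filter_right s fun _ _ => le_of_lt)
      |>.mpr ⟨t, by simp [ht], by simp⟩
  · exact congrArg _ (Finset.filter_congr fun x hx => lt_iff_le_and_ne.trans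
      (and_iff_left (ne_of_mem_of_not_mem hx ht)))

section FXY

variable {n : ℕ} (X Y : Finset (Fin n)) (h : X.card = Y.card)

theorem fXY_eq_fXY_iff (x x' : Fin (n + 1)) :
    fXY n X Y h x = fXY n X Y h x' ↔
      (X.filter (·.castSucc < x)).card = (X.filter (·.castSucc < x')).card := by
  have hx : (X.filter (·.castSucc < x)).card ≤ Y.card := h ▸ Finset.card_filter_le _ _
  have hx' : (X.filter (·.castSucc < x')).card ≤ Y.card := h ▸ Finset.card_filter_le _ _
  unfold fXY
  split_ifs
  · simp only [Fin.castSucc_inj, EmbeddingLike.apply_eq_iff_eq, Fin.mk.injEq]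
  · simp only [(Fin.castSucc_lt_last _).ne, false_iff]; omega
  · simp only [(Fin.castSucc_lt_last _).ne', false_iff]; omega
  · simp only [true_iff]; omega

theorem fXY_castSucc_orderEmbOfFin (k : Fin X.card) :
    fXY n X Y h (X.orderEmbOfFin rfl k).castSucc = (Y.orderEmbOfFin h.symm k).castSucc := by
  have hcard : (X.filter (·.castSucc < (X.orderEmbOfFin rfl k).castSucc)).card = k := by
    simpa only [Fin.castSucc_lt_castSucc_iff] using X.card_filter_lt_orderEmbOfFin k
  unfold fXY
  rw [dif_pos (hcard ▸ h ▸ k.isLt), Fin.castSucc_inj,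
    Finset.orderEmbOfFin_eq_orderEmbOfFin_iff]
  exact hcard

theorem range_fXY : range (fXY n X Y h) = insert (Fin.last n) (Fin.castSucc '' Y) := by
  refine Subset.antisymm ?_ (insert_subset ⟨_, fXY_last n X Y h⟩ ?_)
  · rintro _ ⟨x, rfl⟩
    unfold fXY
    split_ifs
    · exact Or.inr ⟨_, Finset.orderEmbOfFin_mem _ _ _, rfl⟩
    · exact Or.inl rfl
  · rintro _ ⟨y, hy, rfl⟩
    obtain ⟨k, rfl⟩ : y ∈ range (Y.orderEmbOfFin h.symm) := by simpa using hy
    exact ⟨_, fXY_castSucc_orderEmbOfFin X Y h k⟩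

theorem mem_iff_fXY_castSucc_ne_fXY_succ (t : Fin n) :
    t ∈ X ↔ fXY n X Y h t.castSucc ≠ fXY n X Y h t.succ := by
  simp only [ne_eq, fXY_eq_fXY_iff, Fin.castSucc_lt_castSucc_iff, Fin.castSucc_lt_succ_iff]
  exact X.mem_iff_card_filter_lt_ne_card_filter_le t

end FXY

theorem rRel_FXY_iff {n : ℕ} {X Y Z W : Finset (Fin n)} (h₁ : X.card = Y.card)
    (h₂ : Z.card = W.card) :
    RRel (FXY n X Y h₁) (FXY n Z W h₂) ↔ Y = W := by
  rw [OFmon.rRel_iff_range_eq]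
  refine ⟨fun hr => Finset.ext fun y => ?_, fun hYW => ?_⟩
  · simpa [FXY, range_fXY, (Fin.castSucc_lt_last y).ne] using congrArg (Fin.castSucc y ∈ ·) hr
  · simp [FXY, range_fXY, hYW]

theorem lRel_FXY_iff {n : ℕ} {X Y Z W : Finset (Fin n)} (h₁ : X.card = Y.card)
    (h₂ : Z.card = W.card) :
    LRel (FXY n X Y h₁) (FXY n Z W h₂) ↔ X = Z := by
  rw [OFmon.lRel_iff_ker_eq]
  refine ⟨fun hk => Finset.ext fun t => ?_, fun hXZ i j => ?_⟩
  · rw [mem_iff_fXY_castSucc_ne_fXY_succ X Y h₁, mem_iff_fXY_castSucc_ne_fXY_succ Z W h₂]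
    exact not_congr (hk _ _)
  · subst hXZ
    exact (fXY_eq_fXY_iff X Y h₁ i j).trans (fXY_eq_fXY_iff X W h₂ i j).symm

/-- In `OF_{n+1}`: `f_{X,Y} R f_{Z,W}` iff `Y = W` (equivalently, equal images)
and `f_{X,Y} L f_{Z,W}` iff `X = Z` (equivalently, equal kernels). Consequently
`OF_{n+1}` is `H`-trivial. -/
theorem statement13 (n : ℕ) :
    (∀ (X Y Z W : Finset (Fin n)) (h1 : X.card = Y.card) (h2 : Z.card = W.card),
      RRel (FXY n X Y h1) (FXY n Z W h2) ↔ Y = W) ∧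
    (∀ (X Y Z W : Finset (Fin n)) (h1 : X.card = Y.card) (h2 : Z.card = W.card),
      LRel (FXY n X Y h1) (FXY n Z W h2) ↔ X = Z) ∧
    (∀ f g : OFmon n, RRel f g ↔ Set.range f.1 = Set.range g.1) ∧
    (∀ f g : OFmon n, LRel f g ↔ ∀ i j, (f.1 i = f.1 j ↔ g.1 i = g.1 j)) ∧
    (∀ f g : OFmon n, RRel f g → LRel f g → f = g) :=
  ⟨fun _ _ _ _ => rRel_FXY_iff, fun _ _ _ _ => lRel_FXY_iff, OFmon.rRel_iff_range_eq,
    OFmon.lRel_iff_ker_eq, fun _ _ => OFmon.eq_of_rRel_of_lRel⟩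
end

section
/- In OF_n with E = {f_{X,X} : X ⊆ [n-1]}, the generalized Green's relations coincide with the classical ones: ~L = L and ~R = R. Moreover (f_{X,Y})* = f_{X,X} and (f_{X,Y})^+ = f_{Y,Y}, so OF_n is a reduced E-Fountain semigroup satisfying the congruence condition. -/
/-- The distinguished set of idempotents `E = {f_{X,X} : X ⊆ [n]}` of
`OF_{n+1}` (the idempotents of the Catalan submonoid). -/
def Eset (n : ℕ) : Set (OFmon n) := Set.range fun X : Finset (Fin n) => FXY n X X rfl

/-- The generalized Green relation `~L` relative to `E`. -/
def tL (n : ℕ) (a b : OFmon n) : Prop := ∀ e ∈ Eset n, (a * e = a ↔ b * e = b)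

/-- The generalized Green relation `~R` relative to `E`. -/
def tR (n : ℕ) (a b : OFmon n) : Prop := ∀ e ∈ Eset n, (e * a = a ↔ e * b = b)

/-! Each `a` carries two finite sets: its jumps `{t | a t ≠ a (t + 1)}` and its values below
the top. Right multiplication by `f_{X,X}` fixes `a` exactly when the jumps of `a` lie in `X`, left
multiplication exactly when its values do; so `~L` is equality of jump sets and `~R` equality of
images. For a monotone map the jumps determine the kernel, so equal jump sets let each of `a, b`
factor through the other on the left, which is `L`; equal images give `R` by factoring through
the image. Since `f_{X,Y}` has jump set `X` and image `Y`, the idempotent `f_{X,X}` is the unique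
element of `E` in its `~L`-class and `f_{Y,Y}` the one in its `~R`-class.
-/

theorem LRel.mul_right {M : Type*} [Monoid M] {a b : M} (h : LRel a b) (c : M) :
    LRel (a * c) (b * c) := by
  obtain ⟨⟨u, hu⟩, v, hv⟩ := h
  exact ⟨⟨u, by rw [← mul_assoc, hu]⟩, v, by rw [← mul_assoc, hv]⟩

theorem RRel.mul_left {M : Type*} [Monoid M] {a b : M} (h : RRel a b) (c : M) :
    RRel (c * a) (c * b) := by
  obtain ⟨⟨u, hu⟩, v, hv⟩ := h
  exact ⟨⟨u, by rw [mul_assoc, hu]⟩, v, by rw [mul_assoc, hv]⟩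

theorem Fin.apply_eq_of_forall_castSucc_eq_succ {α : Type*} {n : ℕ} (f : Fin (n + 1) → α)
    {x y : Fin (n + 1)} (hxy : x ≤ y)
    (h : ∀ t : Fin n, x ≤ t.castSucc → t.succ ≤ y → f t.castSucc = f t.succ) : f x = f y := by
  induction y using Fin.induction with
  | zero => rw [nonpos_iff_eq_zero.mp hxy]
  | succ t ih =>
    rcases hxy.eq_or_lt with rfl | hlt
    · rfl
    · have hxt : x ≤ t.castSucc := Fin.le_castSucc_iff.mpr hlt
      rw [ih hxt fun s hs hst => h s hs (hst.trans (Fin.castSucc_lt_succ (i := t)).le),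
        h t hxt le_rfl]

namespace OFmon

variable {n : ℕ}

def rank (X : Finset (Fin n)) (x : Fin (n + 1)) : ℕ :=
  (X.filter fun t => t.castSucc < x).card

def nthOrLast (Y : Finset (Fin n)) (k : ℕ) : Fin (n + 1) :=
  if hk : k < Y.card then (Y.orderEmbOfFin rfl ⟨k, hk⟩).castSucc else Fin.last n

theorem fXY_apply (X Y : Finset (Fin n)) (h : X.card = Y.card) (x : Fin (n + 1)) :
    fXY n X Y h x = nthOrLast Y (rank X x) := rfl

theorem rank_mono (X : Finset (Fin n)) : Monotone (rank X) := fun _ _ hab =>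
  Finset.card_le_card (Finset.monotone_filter_right X fun _ _ ht => ht.trans_le hab)

theorem exists_orderEmbOfFin_eq {X : Finset (Fin n)} {t : Fin n} (ht : t ∈ X) :
    ∃ j : Fin X.card, X.orderEmbOfFin rfl j = t := by
  rwa [← Set.mem_range, Finset.range_orderEmbOfFin]

theorem rank_orderEmbOfFin (X : Finset (Fin n)) (j : Fin X.card) :
    rank X (X.orderEmbOfFin rfl j).castSucc = j := by
  have himg : X.filter (fun t => t.castSucc < (X.orderEmbOfFin rfl j).castSucc) =
      (Finset.Iio j).map (X.orderEmbOfFin rfl).toEmbedding := by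
    ext t
    simp only [Finset.mem_filter, Finset.mem_map, Finset.mem_Iio, Fin.castSucc_lt_castSucc_iff,
      RelEmbedding.coe_toEmbedding]
    constructor
    · rintro ⟨ht, hlt⟩
      obtain ⟨i, rfl⟩ := exists_orderEmbOfFin_eq ht
      exact ⟨i, (X.orderEmbOfFin rfl).lt_iff_lt.mp hlt, rfl⟩
    · rintro ⟨i, hij, rfl⟩
      exact ⟨Finset.orderEmbOfFin_mem _ _ _, (X.orderEmbOfFin rfl).lt_iff_lt.mpr hij⟩
  rw [rank, himg, Finset.card_map, Fin.card_Iio]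

theorem rank_succ_of_mem {X : Finset (Fin n)} {t : Fin n} (ht : t ∈ X) :
    rank X t.succ = rank X t.castSucc + 1 := by
  have hle : X.filter (fun s => s.castSucc < t.succ) =
      insert t (X.filter fun s => s.castSucc < t.castSucc) := by
    ext s
    simp only [Finset.mem_filter, Finset.mem_insert, Fin.castSucc_lt_succ_iff,
      Fin.castSucc_lt_castSucc_iff, le_iff_eq_or_lt]
    constructor
    · rintro ⟨hs, rfl | hlt⟩ <;> tauto
    · rintro (rfl | ⟨hs, hlt⟩) <;> tauto
  rw [rank, hle, Finset.card_insert_of_notMem (by simp)]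
  rfl

theorem rank_succ_of_notMem {X : Finset (Fin n)} {t : Fin n} (ht : t ∉ X) :
    rank X t.succ = rank X t.castSucc := by
  unfold rank
  congr 1
  ext s
  simp only [Finset.mem_filter, Fin.castSucc_lt_succ_iff, Fin.castSucc_lt_castSucc_iff,
    and_congr_right_iff, le_iff_eq_or_lt, or_iff_right_iff_imp]
  rintro hs rfl
  exact absurd hs ht

theorem nthOrLast_eq_last_or_mem (Y : Finset (Fin n)) (k : ℕ) :
    nthOrLast Y k = Fin.last n ∨ ∃ t ∈ Y, nthOrLast Y k = t.castSucc := by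
  unfold nthOrLast
  split_ifs
  · exact Or.inr ⟨_, Finset.orderEmbOfFin_mem _ _ _, rfl⟩
  · exact Or.inl rfl

theorem nthOrLast_ne_nthOrLast_succ {Y : Finset (Fin n)} {k : ℕ} (hk : k < Y.card) :
    nthOrLast Y k ≠ nthOrLast Y (k + 1) := by
  unfold nthOrLast
  rw [dif_pos hk]
  split_ifs with hk'
  · intro heq
    simpa [Fin.ext_iff] using (Y.orderEmbOfFin rfl).injective (Fin.castSucc_injective n heq)
  · exact (Fin.castSucc_lt_last _).ne

theorem fXY_castSucc_eq_succ_iff {X Y : Finset (Fin n)} (h : X.card = Y.card) (t : Fin n) :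
    fXY n X Y h t.castSucc = fXY n X Y h t.succ ↔ t ∉ X := by
  refine ⟨fun heq htX => ?_, fun htX => by rw [fXY_apply, fXY_apply, rank_succ_of_notMem htX]⟩
  obtain ⟨j, rfl⟩ := exists_orderEmbOfFin_eq htX
  rw [fXY_apply, fXY_apply, rank_succ_of_mem htX, rank_orderEmbOfFin] at heq
  exact nthOrLast_ne_nthOrLast_succ (h ▸ j.isLt) heq

theorem exists_fXY_eq_castSucc_iff {X Y : Finset (Fin n)} (h : X.card = Y.card) (t : Fin n) :
    (∃ x, fXY n X Y h x = t.castSucc) ↔ t ∈ Y := by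
  constructor
  · rintro ⟨x, hx⟩
    rcases nthOrLast_eq_last_or_mem Y (rank X x) with hl | ⟨s, hs, hst⟩
    · exact absurd (hx.symm.trans hl) (Fin.castSucc_lt_last t).ne
    · rw [← fXY_apply X Y h, hx, (Fin.castSucc_injective n).eq_iff] at hst
      exact hst ▸ hs
  · intro htY
    obtain ⟨j, rfl⟩ := exists_orderEmbOfFin_eq htY
    refine ⟨(X.orderEmbOfFin rfl (j.cast h.symm)).castSucc, ?_⟩
    rw [fXY_apply, rank_orderEmbOfFin, nthOrLast, dif_pos (by simp)]
    rfl

theorem fXX_castSucc_of_mem {X : Finset (Fin n)} {t : Fin n} (ht : t ∈ X) :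
    fXY n X X rfl t.castSucc = t.castSucc := by
  obtain ⟨j, rfl⟩ := exists_orderEmbOfFin_eq ht
  rw [fXY_apply, rank_orderEmbOfFin, nthOrLast, dif_pos j.isLt]

theorem fXX_eq_self_iff (X : Finset (Fin n)) (y : Fin (n + 1)) :
    fXY n X X rfl y = y ↔ y = Fin.last n ∨ ∃ t ∈ X, y = t.castSucc := by
  constructor
  · intro hy
    rcases nthOrLast_eq_last_or_mem X (rank X y) with hl | ⟨t, ht, hyt⟩
    · exact Or.inl (hy ▸ hl)
    · exact Or.inr ⟨t, ht, hy ▸ hyt⟩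
  · rintro (rfl | ⟨t, ht, rfl⟩)
    · exact fXY_last n X X rfl
    · exact fXX_castSucc_of_mem ht

theorem le_fXX (X : Finset (Fin n)) (x : Fin (n + 1)) : x ≤ fXY n X X rfl x := by
  rw [fXY_apply, nthOrLast]
  split_ifs with hk
  · by_contra! hlt
    have hrank := rank_mono X (Fin.castSucc_lt_iff_succ_le.mp hlt)
    rw [rank_succ_of_mem (Finset.orderEmbOfFin_mem _ _ _), rank_orderEmbOfFin] at hrank
    exact (Nat.lt_succ_self _).not_ge hrank
  · exact Fin.le_last x

theorem ext {a b : OFmon n} (h : ∀ x, a.1 x = b.1 x) : a = b :=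
  Subtype.ext (funext h)

theorem mul_apply (a b : OFmon n) (x : Fin (n + 1)) : (a * b).1 x = a.1 (b.1 x) := rfl

theorem FXY_apply (X Y : Finset (Fin n)) (h : X.card = Y.card) (x : Fin (n + 1)) :
    (FXY n X Y h).1 x = fXY n X Y h x := rfl

theorem monotone_val (a : OFmon n) : Monotone a.1 := a.2.1

theorem apply_last (a : OFmon n) : a.1 (Fin.last n) = Fin.last n := a.2.2

def jumpSet (a : OFmon n) : Finset (Fin n) :=
  Finset.univ.filter fun t => a.1 t.castSucc ≠ a.1 t.succ

def imageSet (a : OFmon n) : Finset (Fin n) :=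
  Finset.univ.filter fun t => t.castSucc ∈ Finset.univ.image a.1

@[simp]
theorem mem_jumpSet {a : OFmon n} {t : Fin n} : t ∈ jumpSet a ↔ a.1 t.castSucc ≠ a.1 t.succ := by
  simp [jumpSet]

@[simp]
theorem mem_imageSet {a : OFmon n} {t : Fin n} : t ∈ imageSet a ↔ ∃ x, a.1 x = t.castSucc := by
  simp only [imageSet, Finset.mem_filter, Finset.mem_univ, true_and]
  exact Finset.mem_image.trans (by simp)

theorem jumpSet_FXY (X Y : Finset (Fin n)) (h : X.card = Y.card) : jumpSet (FXY n X Y h) = X := by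
  ext t
  rw [mem_jumpSet, FXY_apply, FXY_apply, Ne, fXY_castSucc_eq_succ_iff, not_not]

theorem imageSet_FXY (X Y : Finset (Fin n)) (h : X.card = Y.card) :
    imageSet (FXY n X Y h) = Y := by
  ext t
  rw [mem_imageSet, ← exists_fXY_eq_castSucc_iff h]
  rfl

theorem mul_FXX_eq_self_iff (a : OFmon n) (X : Finset (Fin n)) :
    a * FXY n X X rfl = a ↔ jumpSet a ⊆ X := by
  constructor
  · intro ha t htJ
    by_contra htX
    rw [mem_jumpSet, ← ha, mul_apply, mul_apply, FXY_apply, FXY_apply,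
      (fXY_castSucc_eq_succ_iff rfl t).mpr htX] at htJ
    exact htJ rfl
  · refine fun hJ => ext fun x => ?_
    rw [mul_apply, FXY_apply]
    -- `a` has no jump between `x` and the first point of `X` at or above it
    refine (Fin.apply_eq_of_forall_castSucc_eq_succ a.1 (le_fXX X x) fun t hxt hty => ?_).symm
    have htX : t ∉ X := fun htX => by
      have hle := fXY_monotone n X X rfl hxt
      rw [fXX_castSucc_of_mem htX] at hle
      exact (Fin.castSucc_lt_succ (i := t)).not_ge (hty.trans hle)
    by_contra hne
    exact htX (hJ (mem_jumpSet.mpr hne))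

theorem FXX_mul_eq_self_iff (a : OFmon n) (X : Finset (Fin n)) :
    FXY n X X rfl * a = a ↔ imageSet a ⊆ X := by
  constructor
  · intro ha t htI
    obtain ⟨x, hx⟩ := mem_imageSet.mp htI
    have hfix : fXY n X X rfl t.castSucc = t.castSucc := by
      rw [← hx, ← FXY_apply, ← mul_apply, ha]
    rcases (fXX_eq_self_iff X _).mp hfix with hl | ⟨s, hs, hts⟩
    · exact absurd hl (Fin.castSucc_lt_last t).ne
    · exact (Fin.castSucc_injective n hts).symm ▸ hs
  · refine fun hI => ext fun x => ?_
    rw [mul_apply, FXY_apply]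
    rcases Fin.eq_castSucc_or_eq_last (a.1 x) with ⟨t, ht⟩ | hl
    · rw [ht, fXX_castSucc_of_mem (hI (mem_imageSet.mpr ⟨x, ht⟩))]
    · rw [hl, fXY_last]

theorem tL_iff_jumpSet_eq (a b : OFmon n) : tL n a b ↔ jumpSet a = jumpSet b := by
  simp only [tL, Eset, Set.forall_mem_range, mul_FXX_eq_self_iff]
  exact ⟨eq_of_forall_ge_iff, fun h _ => h ▸ Iff.rfl⟩

theorem tR_iff_imageSet_eq (a b : OFmon n) : tR n a b ↔ imageSet a = imageSet b := by
  simp only [tR, Eset, Set.forall_mem_range, FXX_mul_eq_self_iff]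
  exact ⟨eq_of_forall_ge_iff, fun h _ => h ▸ Iff.rfl⟩

theorem apply_eq_of_jumpSet_subset {a b : OFmon n} (hJ : jumpSet b ⊆ jumpSet a) {x y : Fin (n + 1)}
    (hxy : a.1 x = a.1 y) : b.1 x = b.1 y := by
  wlog hle : x ≤ y generalizing x y
  · exact (this hxy.symm (le_of_not_ge hle)).symm
  refine Fin.apply_eq_of_forall_castSucc_eq_succ b.1 hle fun t hxt hty => ?_
  by_contra hne
  refine mem_jumpSet.mp (hJ (mem_jumpSet.mpr hne)) (le_antisymm ?_ ?_)
  · exact monotone_val a (Fin.castSucc_lt_succ (i := t)).le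
  · calc a.1 t.succ ≤ a.1 y := monotone_val a hty
      _ = a.1 x := hxy.symm
      _ ≤ a.1 t.castSucc := monotone_val a hxt

theorem exists_mul_eq_of_ker_le {a b : OFmon n} (hk : ∀ x y, a.1 x = a.1 y → b.1 x = b.1 y) :
    ∃ u : OFmon n, u * a = b := by
  have hne (y : Fin (n + 1)) : (Finset.univ.filter fun x => y ≤ a.1 x).Nonempty :=
    ⟨Fin.last n, by simp [apply_last, Fin.le_last]⟩
  let m y := (Finset.univ.filter fun x => y ≤ a.1 x).min' (hne y)
  have hle_m (y : Fin (n + 1)) : y ≤ a.1 (m y) := by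
    simpa using Finset.min'_mem _ (hne y)
  have hm_le {y x : Fin (n + 1)} (hx : y ≤ a.1 x) : m y ≤ x :=
    Finset.min'_le _ _ (by simpa using hx)
  have hm_mono : Monotone m := fun y y' hy => hm_le (hy.trans (hle_m y'))
  have ha_m (x : Fin (n + 1)) : a.1 (m (a.1 x)) = a.1 x :=
    le_antisymm (monotone_val a (hm_le le_rfl)) (hle_m _)
  have hm_last : a.1 (m (Fin.last n)) = a.1 (Fin.last n) := by
    rw [apply_last]
    exact le_antisymm (Fin.le_last _) (hle_m _)
  refine ⟨⟨fun y => b.1 (m y), (monotone_val b).comp hm_mono, ?_⟩, ext fun x => hk _ _ (ha_m x)⟩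
  change b.1 (m (Fin.last n)) = Fin.last n
  rw [hk _ _ hm_last, apply_last]

theorem exists_mul_eq_of_forall_exists {a b : OFmon n} (hr : ∀ x, ∃ z, a.1 z = b.1 x) :
    ∃ u : OFmon n, a * u = b := by
  have hne (x : Fin (n + 1)) : (Finset.univ.filter fun z => a.1 z ≤ b.1 x).Nonempty := by
    obtain ⟨z, hz⟩ := hr x
    exact ⟨z, by simp [hz]⟩
  let u x := (Finset.univ.filter fun z => a.1 z ≤ b.1 x).max' (hne x)
  have ha_u_le (x : Fin (n + 1)) : a.1 (u x) ≤ b.1 x := by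
    simpa using Finset.max'_mem _ (hne x)
  have hle_u {x z : Fin (n + 1)} (hz : a.1 z ≤ b.1 x) : z ≤ u x :=
    Finset.le_max' _ _ (by simpa using hz)
  have hu_mono : Monotone u := fun x x' hx => hle_u ((ha_u_le x).trans (monotone_val b hx))
  have ha_u (x : Fin (n + 1)) : a.1 (u x) = b.1 x := by
    obtain ⟨z, hz⟩ := hr x
    exact le_antisymm (ha_u_le x) (hz ▸ monotone_val a (hle_u hz.le))
  refine ⟨⟨u, hu_mono, ?_⟩, ext ha_u⟩
  exact le_antisymm (Fin.le_last _) (hle_u (by rw [apply_last, apply_last]))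

theorem exists_mul_eq_iff_jumpSet_subset (a b : OFmon n) :
    (∃ u : OFmon n, u * a = b) ↔ jumpSet b ⊆ jumpSet a := by
  constructor
  · rintro ⟨u, rfl⟩ t
    simp only [mem_jumpSet, mul_apply]
    exact mt (congrArg u.1)
  · exact fun hJ => exists_mul_eq_of_ker_le fun _ _ => apply_eq_of_jumpSet_subset hJ

theorem imageSet_subset_iff (a b : OFmon n) :
    imageSet b ⊆ imageSet a ↔ ∀ x, ∃ z, a.1 z = b.1 x := by
  constructor
  · intro hI x
    rcases Fin.eq_castSucc_or_eq_last (b.1 x) with ⟨t, ht⟩ | hl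
    · obtain ⟨z, hz⟩ := mem_imageSet.mp (hI (mem_imageSet.mpr ⟨x, ht⟩))
      exact ⟨z, hz.trans ht.symm⟩
    · exact ⟨Fin.last n, by rw [hl, apply_last]⟩
  · intro hr t ht
    obtain ⟨x, hx⟩ := mem_imageSet.mp ht
    obtain ⟨z, hz⟩ := hr x
    exact mem_imageSet.mpr ⟨z, hz.trans hx⟩

theorem exists_mul_eq_iff_imageSet_subset (a b : OFmon n) :
    (∃ u : OFmon n, a * u = b) ↔ imageSet b ⊆ imageSet a := by
  rw [imageSet_subset_iff]
  constructor
  · rintro ⟨u, rfl⟩ x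
    exact ⟨u.1 x, rfl⟩
  · exact exists_mul_eq_of_forall_exists

theorem LRel_iff_jumpSet_eq (a b : OFmon n) : LRel a b ↔ jumpSet a = jumpSet b := by
  rw [LRel, exists_mul_eq_iff_jumpSet_subset, exists_mul_eq_iff_jumpSet_subset,
    Finset.Subset.antisymm_iff, and_comm]

theorem RRel_iff_imageSet_eq (a b : OFmon n) : RRel a b ↔ imageSet a = imageSet b := by
  rw [RRel, exists_mul_eq_iff_imageSet_subset, exists_mul_eq_iff_imageSet_subset,
    Finset.Subset.antisymm_iff, and_comm]

theorem tL_iff_LRel (a b : OFmon n) : tL n a b ↔ LRel a b := by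
  rw [tL_iff_jumpSet_eq, LRel_iff_jumpSet_eq]

theorem tR_iff_RRel (a b : OFmon n) : tR n a b ↔ RRel a b := by
  rw [tR_iff_imageSet_eq, RRel_iff_imageSet_eq]

theorem existsUnique_mem_Eset_tL (a : OFmon n) : ∃! e, e ∈ Eset n ∧ tL n a e := by
  refine ⟨FXY n (jumpSet a) (jumpSet a) rfl, ⟨⟨_, rfl⟩, ?_⟩, ?_⟩
  · rw [tL_iff_jumpSet_eq, jumpSet_FXY]
  · rintro _ ⟨⟨X, rfl⟩, he⟩
    rw [tL_iff_jumpSet_eq, jumpSet_FXY] at he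
    subst he
    rfl

theorem existsUnique_mem_Eset_tR (a : OFmon n) : ∃! e, e ∈ Eset n ∧ tR n a e := by
  refine ⟨FXY n (imageSet a) (imageSet a) rfl, ⟨⟨_, rfl⟩, ?_⟩, ?_⟩
  · rw [tR_iff_imageSet_eq, imageSet_FXY]
  · rintro _ ⟨⟨X, rfl⟩, he⟩
    rw [tR_iff_imageSet_eq, imageSet_FXY] at he
    subst he
    rfl

end OFmon

/-- In `OF_{n+1}` with `E = {f_{X,X}}`: the generalized Green relations
coincide with the classical ones (`~L = L`, `~R = R`), with
`(f_{X,Y})* = f_{X,X}` and `(f_{X,Y})⁺ = f_{Y,Y}`; moreover `OF_{n+1}` is a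
reduced `E`-Fountain semigroup (each class of `~L` and `~R` contains a unique
idempotent of `E`, and `ef = e ↔ fe = e` on `E`) satisfying the congruence
condition. -/
theorem statement17 (n : ℕ) :
    (∀ a b : OFmon n, tL n a b ↔ LRel a b) ∧
    (∀ a b : OFmon n, tR n a b ↔ RRel a b) ∧
    (∀ (X Y : Finset (Fin n)) (h : X.card = Y.card),
      tL n (FXY n X Y h) (FXY n X X rfl)) ∧
    (∀ (X Y : Finset (Fin n)) (h : X.card = Y.card),
      tR n (FXY n X Y h) (FXY n Y Y rfl)) ∧
    (∀ e ∈ Eset n, e * e = e) ∧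
    (∀ e ∈ Eset n, ∀ f ∈ Eset n, (e * f = e ↔ f * e = e)) ∧
    (∀ a : OFmon n, ∃! e, e ∈ Eset n ∧ tL n a e) ∧
    (∀ a : OFmon n, ∃! e, e ∈ Eset n ∧ tR n a e) ∧
    (∀ a b c : OFmon n, tL n a b → tL n (a * c) (b * c)) ∧
    (∀ a b c : OFmon n, tR n a b → tR n (c * a) (c * b)) := by
  refine ⟨OFmon.tL_iff_LRel, OFmon.tR_iff_RRel, ?_, ?_, ?_, ?_, OFmon.existsUnique_mem_Eset_tL,
    OFmon.existsUnique_mem_Eset_tR, ?_, ?_⟩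
  · intro X Y h
    rw [OFmon.tL_iff_jumpSet_eq, OFmon.jumpSet_FXY, OFmon.jumpSet_FXY]
  · intro X Y h
    rw [OFmon.tR_iff_imageSet_eq, OFmon.imageSet_FXY, OFmon.imageSet_FXY]
  · rintro _ ⟨X, rfl⟩
    rw [OFmon.mul_FXX_eq_self_iff, OFmon.jumpSet_FXY]
  · rintro _ ⟨X, rfl⟩ _ ⟨Y, rfl⟩
    rw [OFmon.mul_FXX_eq_self_iff, OFmon.FXX_mul_eq_self_iff, OFmon.jumpSet_FXY,
      OFmon.imageSet_FXY]
  · intro a b c h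
    rw [OFmon.tL_iff_LRel] at h ⊢
    exact h.mul_right c
  · intro a b c h
    rw [OFmon.tR_iff_RRel] at h ⊢
    exact h.mul_left c
end
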